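/- Let q be a prime power and n = n₁n₂ where n₁ and n₂ are relatively prime. If a_i ∈ F_{q^{n_i}} is q^{n_i}/q-normal for i = 1, 2, then the product a₁a₂ is q^n/q-normal. -/

import Mathlib

open scoped BigOperators

/-- In an ambient finite field `E` (of order `q^N` for some multiple `N` of `m`), the element
`a` — assumed to lie in the subfield `F_{q^m} = {x | x ^ q ^ m = x}` — is `q^m/q^d`-normal:
the conjugates `a ^ q ^ (d*i)`, `i = 0, …, m/d − 1`, form a basis of `F_{q^m}` as a vector
space over `F_{q^d} = {x | x ^ q ^ d = x}`, encoded by the unique representation of every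
element of `F_{q^m}` as a linear combination of the conjugates with coefficients in `F_{q^d}`. -/
def IsNormalElemIn (q d m : ℕ) {E : Type*} [Field E] (a : E) : Prop :=
  ∀ x : E, x ^ q ^ m = x →
    ∃! c : Fin (m / d) → E,
      (∀ i, c i ^ q ^ d = c i) ∧ x = ∑ i, c i * a ^ q ^ (d * (i : ℕ))


/-!
Write `F_{q^k}` for `{x | x ^ q ^ k = x}`. Since `n₁` and `n₂` are coprime, powers of the
Frobenius `x ↦ x ^ q ^ n₂` shift the conjugates `a₁ ^ q ^ i` by every residue mod `n₁`; hence an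
`F_{q^{n₂}}`-linear relation `∑ eᵢ a₁ ^ q ^ i = 0` makes the linearised polynomial
`∑ eᵢ X ^ q ^ i` vanish on all of `F_{q^{n₁}}`, and as its degree is below `q ^ n₁` it is zero:
the conjugates of `a₁` stay independent over `F_{q^{n₂}}`. By the Chinese remainder theorem the
conjugates of `a₁ a₂` are the products `a₁ ^ q ^ i * a₂ ^ q ^ j`, so an `F_q`-relation among them
is an `F_{q^{n₂}}`-relation among the conjugates of `a₁` whose coefficients are `F_q`-combinations
of the conjugates of `a₂`, and both independences kill it. Finally, `n` independent conjugates in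
a field with `q ^ n` elements form a basis.
-/
open Polynomial Finset

theorem pow_pow_eq_of_modEq {M : Type*} [Monoid M] {q m i j : ℕ} {x : M} (hx : x ^ q ^ m = x)
    (hij : i ≡ j [MOD m]) : x ^ q ^ i = x ^ q ^ j := by
  have hper : Function.IsPeriodicPt (· ^ q) m x := by
    simpa [Function.IsPeriodicPt, Function.IsFixedPt, pow_iterate] using hx
  have key := (hper.iterate_mod_apply i).symm.trans (hij ▸ hper.iterate_mod_apply j)
  simpa only [pow_iterate] using key

theorem pow_pow_eq_self_of_dvd {M : Type*} [Monoid M] {q m j : ℕ} {x : M} (hx : x ^ q ^ m = x)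
    (hmj : m ∣ j) : x ^ q ^ j = x := by
  simpa using pow_pow_eq_of_modEq hx (Nat.modEq_zero_iff_dvd.2 hmj)

section
variable {E : Type*} [Field E] {q : ℕ}

theorem card_subtype_pow_eq_self [Fintype E] {n : ℕ} (hE : Fintype.card E = q ^ n) :
    Nat.card {x : E // x ^ q = x} = q := by
  classical
  have hE1 : 1 < Fintype.card E := Fintype.one_lt_card
  have hn : n ≠ 0 := by
    rintro rfl
    simp [hE] at hE1
  have hq : 1 < q := (Nat.one_lt_pow_iff hn).1 (hE ▸ hE1)
  have hX : ∀ r, 0 < r → (X ^ r - X : E[X]) = X * (X ^ (r - 1) - 1) := fun r hr => by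
    rw [mul_sub, mul_one, ← pow_succ', Nat.sub_add_cancel hr]
  have hdvd : (X ^ q - X : E[X]) ∣ X ^ Fintype.card E - X := by
    rw [hX q (by omega), hE, hX _ (by positivity)]
    obtain ⟨t, ht⟩ := Nat.sub_one_dvd_pow_sub_one q n
    rw [ht, pow_mul]
    exact mul_dvd_mul_left X (sub_one_dvd_pow_sub_one _ t)
  have hg0 := FiniteField.X_pow_card_sub_X_ne_zero E hE1
  set f : E[X] := X ^ q - X
  have hsplit : f.Splits := by
    refine Splits.of_dvd (splits_iff_card_roots.2 ?_) hg0 hdvd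
    rw [FiniteField.roots_X_pow_card_sub_X, FiniteField.X_pow_card_sub_X_natDegree_eq E hE1]
    rfl
  have hnodup : f.roots.Nodup :=
    Multiset.nodup_of_le (roots.le_of_dvd hg0 hdvd)
      (FiniteField.roots_X_pow_card_sub_X E ▸ Finset.univ.nodup)
  have hf0 : f ≠ 0 := FiniteField.X_pow_card_sub_X_ne_zero E hq
  calc Nat.card {x : E // x ^ q = x} = Nat.card f.roots.toFinset :=
        Nat.card_congr <| Equiv.subtypeEquivRight fun x => by
          simp [f, mem_roots hf0, sub_eq_zero]
    _ = Multiset.card f.roots := by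
        rw [Nat.card_eq_fintype_card, Fintype.card_coe, Multiset.toFinset_card_of_nodup hnodup]
    _ = q := by
        rw [← hsplit.natDegree_eq_card_roots, FiniteField.X_pow_card_sub_X_natDegree_eq E hq]

theorem sum_mul_pow_pow {ι : Type*} [Fintype ι] {p k j : ℕ} [ExpChar E p] (hq : q = p ^ k)
    {c : ι → E} (hc : ∀ i, c i ^ q ^ j = c i) (b : ι → E) :
    (∑ i, c i * b i) ^ q ^ j = ∑ i, c i * b i ^ q ^ j := by
  subst hq
  rw [← pow_mul, sum_pow_char_pow]
  simp only [mul_pow, pow_mul, hc]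

/-- The conjugates `a ^ q ^ i`, `i < m`, are linearly independent over `F_{q^d}`. -/
def ConjugatesLinIndep (q d m : ℕ) (a : E) : Prop :=
  ∀ c : Fin m → E, (∀ i, c i ^ q ^ d = c i) → ∑ i, c i * a ^ q ^ (i : ℕ) = 0 → c = 0

theorem isNormalElemIn_one_iff {m : ℕ} {a : E} :
    IsNormalElemIn q 1 m a ↔ ∀ x : E, x ^ q ^ m = x →
      ∃! c : Fin m → E, (∀ i, c i ^ q = c i) ∧ x = ∑ i, c i * a ^ q ^ (i : ℕ) := by
  unfold IsNormalElemIn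
  rw [Nat.div_one]
  simp only [pow_one, one_mul]

theorem IsNormalElemIn.conjugatesLinIndep {m : ℕ} {a : E} (hq : q ≠ 0)
    (ha : IsNormalElemIn q 1 m a) : ConjugatesLinIndep q 1 m a := by
  intro c hc hsum
  rw [isNormalElemIn_one_iff] at ha
  refine (ha 0 (zero_pow (pow_ne_zero m hq))).unique ⟨by simpa using hc, hsum.symm⟩
    ⟨fun _ => zero_pow hq, by simp⟩

theorem eq_zero_of_forall_sum_mul_pow_pow_eq_zero {m : ℕ} (hq : 1 < q)
    (hcard : q ^ m ≤ Nat.card {x : E // x ^ q ^ m = x}) {e : Fin m → E}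
    (he : ∀ x : E, x ^ q ^ m = x → ∑ i, e i * x ^ q ^ (i : ℕ) = 0) : e = 0 := by
  rcases Nat.eq_zero_or_pos m with rfl | hm
  · exact Subsingleton.elim _ _
  have : Finite {x : E // x ^ q ^ m = x} :=
    Nat.finite_of_card_ne_zero ((pow_pos (by omega) m).trans_le hcard).ne'
  have := Fintype.ofFinite {x : E // x ^ q ^ m = x}
  set P : E[X] := ∑ i, C (e i) * X ^ q ^ (i : ℕ)
  have hcoeff : ∀ j : Fin m, P.coeff (q ^ (j : ℕ)) = e j := fun j => by
    rw [finsetSum_coeff, Fintype.sum_eq_single j]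
    · simp
    · intro i hij
      rw [coeff_C_mul_X_pow, if_neg]
      exact fun h => hij (Fin.ext (Nat.pow_right_injective hq h).symm)
  have hdeg : P.natDegree < Fintype.card {x : E // x ^ q ^ m = x} :=
    calc P.natDegree ≤ q ^ (m - 1) := natDegree_sum_le_of_forall_le _ _ fun i _ =>
          (natDegree_C_mul_X_pow_le _ _).trans (Nat.pow_le_pow_right (by omega) (by omega))
      _ < q ^ m := Nat.pow_lt_pow_right hq (by omega)
      _ ≤ _ := by rwa [← Nat.card_eq_fintype_card]
  have hP : P = 0 := eq_zero_of_natDegree_lt_card_of_eval_eq_zero P Subtype.val_injective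
    (fun x => by simp [P, eval_finsetSum, he x x.2]) hdeg
  funext j
  rw [← hcoeff j, hP, coeff_zero]
  rfl

theorem sum_mul_pow_pow_add_eq_zero {p k m l : ℕ} [ExpChar E p] (hq : q = p ^ k)
    (hml : m.Coprime l) {a : E} (ha : a ^ q ^ m = a) {e : Fin m → E}
    (he : ∀ i, e i ^ q ^ l = e i) (hsum : ∑ i, e i * a ^ q ^ (i : ℕ) = 0) (s : ℕ) :
    ∑ i, e i * a ^ q ^ ((i : ℕ) + s) = 0 := by
  -- the shift by `t ≡ s [MOD m]` with `l ∣ t` is the Frobenius `x ↦ x ^ q ^ t` applied to `hsum`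
  obtain ⟨t, hts, htl⟩ := Nat.chineseRemainder hml s 0
  have hq0 : q ≠ 0 := hq ▸ pow_ne_zero k (expChar_pos E p).ne'
  calc ∑ i, e i * a ^ q ^ ((i : ℕ) + s) = ∑ i, e i * (a ^ q ^ (i : ℕ)) ^ q ^ t := by
        refine Fintype.sum_congr _ _ fun i => ?_
        rw [← pow_mul, ← pow_add, pow_pow_eq_of_modEq ha (Nat.ModEq.add_left _ hts.symm)]
    _ = (∑ i, e i * a ^ q ^ (i : ℕ)) ^ q ^ t :=
        (sum_mul_pow_pow hq (fun i => pow_pow_eq_self_of_dvd (he i)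
          (Nat.modEq_zero_iff_dvd.1 htl)) _).symm
    _ = 0 := by rw [hsum, zero_pow (pow_ne_zero t hq0)]

theorem IsNormalElemIn.conjugatesLinIndep_of_coprime {p k m l : ℕ} [ExpChar E p]
    (hq : q = p ^ k) (hq1 : 1 < q) (hml : m.Coprime l) {a : E} (ha : a ^ q ^ m = a)
    (hnormal : IsNormalElemIn q 1 m a) (hcard : q ^ m ≤ Nat.card {x : E // x ^ q ^ m = x}) :
    ConjugatesLinIndep q l m a := by
  intro e he hsum
  refine eq_zero_of_forall_sum_mul_pow_pow_eq_zero hq1 hcard fun x hx => ?_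
  obtain ⟨c, ⟨hc, rfl⟩, -⟩ := isNormalElemIn_one_iff.1 hnormal x hx
  calc ∑ i, e i * (∑ j, c j * a ^ q ^ (j : ℕ)) ^ q ^ (i : ℕ)
      = ∑ i, e i * ∑ j, c j * a ^ q ^ ((j : ℕ) + i) := by
        refine Fintype.sum_congr _ _ fun i => ?_
        rw [sum_mul_pow_pow hq (fun j => pow_pow_eq_self_of_dvd (by simpa using hc j)
          (one_dvd _))]
        simp only [← pow_mul, ← pow_add]
    _ = ∑ j, c j * ∑ i, e i * a ^ q ^ ((i : ℕ) + j) := by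
        simp only [mul_sum]
        rw [sum_comm]
        simp only [add_comm, mul_left_comm]
    _ = 0 := sum_eq_zero fun j _ => by
        rw [sum_mul_pow_pow_add_eq_zero hq hml ha he hsum, mul_zero]

noncomputable def finMulEquivProdOfCoprime {m n : ℕ} (hm : 0 < m) (hn : 0 < n)
    (hmn : m.Coprime n) : Fin (m * n) ≃ Fin m × Fin n :=
  Equiv.ofBijective (fun r => (⟨r % m, Nat.mod_lt _ hm⟩, ⟨r % n, Nat.mod_lt _ hn⟩)) <| by
    rw [Fintype.bijective_iff_injective_and_card]
    refine ⟨fun r s hrs => Fin.ext ?_, by simp⟩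
    simp only [Prod.mk.injEq, Fin.mk.injEq] at hrs
    have hrs' := (Nat.modEq_and_modEq_iff_modEq_mul hmn).1 hrs
    rwa [Nat.ModEq, Nat.mod_eq_of_lt r.2, Nat.mod_eq_of_lt s.2] at hrs'

theorem finMulEquivProdOfCoprime_symm_modEq_fst {m n : ℕ} (hm : 0 < m) (hn : 0 < n)
    (hmn : m.Coprime n) (x : Fin m × Fin n) :
    ((finMulEquivProdOfCoprime hm hn hmn).symm x : ℕ) ≡ x.1 [MOD m] := by
  conv_rhs => rw [← (finMulEquivProdOfCoprime hm hn hmn).apply_symm_apply x]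
  exact (Nat.mod_modEq _ _).symm

theorem finMulEquivProdOfCoprime_symm_modEq_snd {m n : ℕ} (hm : 0 < m) (hn : 0 < n)
    (hmn : m.Coprime n) (x : Fin m × Fin n) :
    ((finMulEquivProdOfCoprime hm hn hmn).symm x : ℕ) ≡ x.2 [MOD n] := by
  conv_rhs => rw [← (finMulEquivProdOfCoprime hm hn hmn).apply_symm_apply x]
  exact (Nat.mod_modEq _ _).symm

theorem ConjugatesLinIndep.mul {p k m n : ℕ} [ExpChar E p] (hq : q = p ^ k) (hm : 0 < m)
    (hn : 0 < n) (hmn : m.Coprime n) {a b : E} (ha : a ^ q ^ m = a) (hb : b ^ q ^ n = b)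
    (ha' : ConjugatesLinIndep q n m a) (hb' : ConjugatesLinIndep q 1 n b) :
    ConjugatesLinIndep q 1 (m * n) (a * b) := by
  intro d hd hsum
  set ψ := finMulEquivProdOfCoprime hm hn hmn
  -- regrouping `∑ d r (a * b) ^ q ^ r` along `r ↦ (r % m, r % n)` gives `∑ e i * a ^ q ^ i`
  let e : Fin m → E := fun i => ∑ j, d (ψ.symm (i, j)) * b ^ q ^ (j : ℕ)
  have he : ∀ i, e i ^ q ^ n = e i := fun i => by
    rw [sum_mul_pow_pow hq fun j => pow_pow_eq_self_of_dvd (hd _) (one_dvd n)]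
    refine Fintype.sum_congr _ _ fun j => ?_
    rw [← pow_mul, ← pow_add, pow_pow_eq_of_modEq hb Nat.add_modEq_right]
  have hesum : ∑ i, e i * a ^ q ^ (i : ℕ) = 0 := by
    rw [← hsum, ← ψ.symm.sum_comp, Fintype.sum_prod_type]
    refine Fintype.sum_congr _ _ fun i => ?_
    rw [sum_mul]
    refine Fintype.sum_congr _ _ fun j => ?_
    rw [mul_pow, pow_pow_eq_of_modEq ha (finMulEquivProdOfCoprime_symm_modEq_fst hm hn hmn _),
      pow_pow_eq_of_modEq hb (finMulEquivProdOfCoprime_symm_modEq_snd hm hn hmn _)]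
    ring
  have hd0 : ∀ x, d (ψ.symm x) = 0 := fun x =>
    congrFun (hb' _ (fun j => hd _) (congrFun (ha' e he hesum) x.1)) x.2
  funext r
  simpa using hd0 (ψ r)

theorem ConjugatesLinIndep.isNormalElemIn [Fintype E] {p k m : ℕ} [ExpChar E p]
    (hq : q = p ^ k) (hE : Fintype.card E = q ^ m) {b : E} (hb : ConjugatesLinIndep q 1 m b) :
    IsNormalElemIn q 1 m b := by
  let Φ : (Fin m → {x : E // x ^ q = x}) → E := fun c => ∑ i, (c i : E) * b ^ q ^ (i : ℕ)
  have hfrob : ∀ x y : E, (x - y) ^ q = x ^ q - y ^ q := by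
    subst hq
    exact fun x y => sub_pow_expChar_pow x y k
  have hinj : Function.Injective Φ := by
    intro c c' h
    have hfix : ∀ i, ((c i : E) - c' i) ^ q ^ 1 = (c i : E) - c' i := fun i => by
      rw [pow_one, hfrob, (c i).2, (c' i).2]
    have hsub := hb _ hfix (by simpa only [sub_mul, sum_sub_distrib, sub_eq_zero] using h)
    funext i
    exact Subtype.ext (sub_eq_zero.1 (congrFun hsub i))
  have hbij : Function.Bijective Φ := hinj.bijective_of_nat_card_le <| by
    rw [Nat.card_fun, card_subtype_pow_eq_self hE, Nat.card_eq_fintype_card, hE, Nat.card_fin]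
  refine isNormalElemIn_one_iff.2 fun x _ => ?_
  obtain ⟨c, rfl⟩ := hbij.2 x
  refine ⟨fun i => c i, ⟨fun i => (c i).2, rfl⟩, fun c' ⟨hc', hx⟩ => ?_⟩
  have hcc' := hinj (a₁ := fun i => ⟨c' i, hc' i⟩) hx.symm
  funext i
  exact congrArg (fun f => (f i : E)) hcc'

end

/-- Lemma 4.3: Let `q` be a prime power and `n = n₁ n₂` with `n₁, n₂`
relatively prime.  If `aᵢ ∈ F_{q^{nᵢ}}` is `q^{nᵢ}/q`-normal for `i = 1, 2`, then the
product `a₁ a₂` is `q^n/q`-normal. -/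
theorem stmt9 (q n n₁ n₂ : ℕ) (hq : IsPrimePow q) (h₁ : 0 < n₁) (h₂ : 0 < n₂)
    (hn : n = n₁ * n₂) (hcop : Nat.Coprime n₁ n₂)
    (E : Type) [Field E] [Fintype E] (hE : Fintype.card E = q ^ n)
    (a₁ a₂ : E) (ha₁F : a₁ ^ q ^ n₁ = a₁) (ha₂F : a₂ ^ q ^ n₂ = a₂)
    (ha₁ : IsNormalElemIn q 1 n₁ a₁) (ha₂ : IsNormalElemIn q 1 n₂ a₂) :
    IsNormalElemIn q 1 n (a₁ * a₂) := by
  subst hn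
  have hq1 := hq.one_lt
  obtain ⟨p, k, hp, -, rfl⟩ := hq
  have := Fact.mk hp.nat_prime
  have : CharP E p := charP_of_card_eq_prime_pow (hE.trans (pow_mul p k _).symm)
  have hcard₁ : Nat.card {x : E // x ^ (p ^ k) ^ n₁ = x} = (p ^ k) ^ n₁ :=
    card_subtype_pow_eq_self (hE.trans (pow_mul _ n₁ n₂))
  refine ConjugatesLinIndep.isNormalElemIn rfl hE (.mul rfl h₁ h₂ hcop ha₁F ha₂F ?_ ?_)
  · exact ha₁.conjugatesLinIndep_of_coprime rfl hq1 hcop ha₁F hcard₁.ge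
  · exact ha₂.conjugatesLinIndep (by omega)
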